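/- Let δ ∈ D and let c be a symmetric copula density with diagonal section δ. Then for every r ∈ [0,1] and every coordinate i: ∫_{[0,1]^d} c(u) 1{u_i < max(u), u_i ≤ r} du = r - δ(r)/d = ∫_0^r (1 - δ'(s)/d) ds. Consequently c = 0 a.e. on {u : ∃i, u_i < max(u) and δ'(u_i) = d}. -/

import Mathlib

/-!
By symmetry of `c`, the mass `∫ c · 1{uᵢ = max u, uᵢ ≤ r}` does not depend on `i`. Ties between
coordinates are Lebesgue-null, so these `d` masses add up to the diagonal mass `δ r`, and each
equals `δ r / d`; subtracting it from the uniform marginal gives `r - δ r / d`. Being Lipschitz,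
`δ` is absolutely continuous, so `r - δ r / d = ∫₀ʳ (1 - δ'/d)`. Hence the law of `uᵢ` under the
measure `c · 1{uᵢ < max u} du` has density `1 - δ'/d`, which vanishes where `δ' = d`: that set
carries no mass.
-/

open MeasureTheory Set intervalIntegral
open scoped NNReal

theorem integral_mul_ite_one_zero {α : Type*} [MeasurableSpace α] {μ : Measure α} (f : α → ℝ)
    {p : α → Prop} [DecidablePred p] (hp : MeasurableSet {x | p x}) :
    ∫ x, f x * (if p x then 1 else 0) ∂μ = ∫ x in {x | p x}, f x ∂μ := by
  rw [← MeasureTheory.integral_indicator hp]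
  congr 1 with x
  by_cases h : p x <;> simp [h]

section MaxCoordinate

variable {ι : Type*} [Fintype ι]

theorem volume_setOf_apply_eq_apply {i j : ι} (hij : i ≠ j) :
    volume {u : ι → ℝ | u i = u j} = 0 := by
  let L : (ι → ℝ) →ₗ[ℝ] ℝ := LinearMap.proj (R := ℝ) (φ := fun _ => ℝ) i - LinearMap.proj j
  have hL : {u : ι → ℝ | u i = u j} = LinearMap.ker L := by
    ext u; simp [L, sub_eq_zero]
  rw [hL]
  refine Measure.addHaar_submodule _ _ fun htop => ?_
  classical
  have : (Pi.single i 1 : ι → ℝ) ∈ LinearMap.ker L := htop ▸ Submodule.mem_top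
  simp [L, Pi.single_eq_of_ne hij.symm] at this

theorem setIntegral_pi_comp_perm {E : Type*} [NormedAddCommGroup E]
    [NormedSpace ℝ E] (σ : Equiv.Perm ι) (s : Set ℝ) (f : (ι → ℝ) → E) :
    ∫ u in univ.pi (fun _ => s), f (u ∘ σ) = ∫ u in univ.pi (fun _ => s), f u := by
  have hT (u : ι → ℝ) : MeasurableEquiv.piCongrLeft (fun _ : ι => ℝ) σ.symm u = u ∘ σ := by
    ext k
    simpa [MeasurableEquiv.coe_piCongrLeft] using
      Equiv.piCongrLeft_apply_apply (P := fun _ : ι => ℝ) σ.symm u (σ k)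
  have hpre : MeasurableEquiv.piCongrLeft (fun _ : ι => ℝ) σ.symm ⁻¹' univ.pi (fun _ => s) =
      univ.pi (fun _ => s) := by
    ext u; simpa [hT] using σ.forall_congr_right (q := fun i => u i ∈ s)
  have := (volume_measurePreserving_piCongrLeft (fun _ : ι => ℝ) σ.symm).setIntegral_preimage_emb
    (MeasurableEquiv.measurableEmbedding _) f (univ.pi fun _ => s)
  rw [hpre] at this
  simpa only [hT] using this

theorem measurable_iSup_apply : Measurable fun u : ι → ℝ => ⨆ k, u k :=
  Measurable.iSup fun k => measurable_pi_apply k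

theorem measurableSet_apply_eq_iSup_and_le (i : ι) (r : ℝ) :
    MeasurableSet {u : ι → ℝ | u i = ⨆ k, u k ∧ u i ≤ r} :=
  (measurableSet_eq_fun (measurable_pi_apply i) measurable_iSup_apply).inter
    (measurableSet_le (measurable_pi_apply i) measurable_const)

theorem setIntegral_apply_lt_iSup_and_le {μ : Measure (ι → ℝ)} {f : (ι → ℝ) → ℝ}
    (hf : Integrable f μ) (i : ι) (r : ℝ) :
    ∫ u in {u | u i < ⨆ k, u k ∧ u i ≤ r}, f u ∂μ =
      ∫ u in {u | u i ≤ r}, f u ∂μ - ∫ u in {u | u i = ⨆ k, u k ∧ u i ≤ r}, f u ∂μ := by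
  have hsplit : {u : ι → ℝ | u i ≤ r} =
      {u | u i < ⨆ k, u k ∧ u i ≤ r} ∪ {u | u i = ⨆ k, u k ∧ u i ≤ r} := by
    ext u
    have := le_ciSup (Set.finite_range u).bddAbove i
    constructor
    · intro h
      rcases this.lt_or_eq with h' | h'
      exacts [Or.inl ⟨h', h⟩, Or.inr ⟨h', h⟩]
    · rintro (h | h) <;> exact h.2
  have hdisj : Disjoint {u : ι → ℝ | u i < ⨆ k, u k ∧ u i ≤ r}
      {u | u i = ⨆ k, u k ∧ u i ≤ r} :=
    disjoint_left.2 fun u h h' => h.1.ne h'.1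
  rw [eq_sub_iff_add_eq, ← setIntegral_union hdisj (measurableSet_apply_eq_iSup_and_le i r)
    hf.integrableOn hf.integrableOn, ← hsplit]

variable {s : Set ℝ} {c : (ι → ℝ) → ℝ}

theorem setIntegral_apply_eq_iSup_and_le_of_perm_invariant
    (hc : ∀ (σ : Equiv.Perm ι) (u : ι → ℝ), c (u ∘ σ) = c u) (i j : ι) (r : ℝ) :
    ∫ u in {u | u i = ⨆ k, u k ∧ u i ≤ r}, c u ∂volume.restrict (univ.pi fun _ => s) =
      ∫ u in {u | u j = ⨆ k, u k ∧ u j ≤ r}, c u ∂volume.restrict (univ.pi fun _ => s) := by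
  classical
  have hswap : ∀ u : ι → ℝ,
      {u | u i = ⨆ k, u k ∧ u i ≤ r}.indicator c (u ∘ Equiv.swap i j) =
        {u | u j = ⨆ k, u k ∧ u j ≤ r}.indicator c u := fun u => by
    simp [indicator_apply, hc, Equiv.iSup_comp (g := u)]
  rw [← MeasureTheory.integral_indicator (measurableSet_apply_eq_iSup_and_le i r),
    ← MeasureTheory.integral_indicator (measurableSet_apply_eq_iSup_and_le j r), ← funext hswap,
    setIntegral_pi_comp_perm]

theorem card_mul_setIntegral_apply_eq_iSup_and_le [Nonempty ι]
    (hint : IntegrableOn c (univ.pi fun _ => s))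
    (hc : ∀ (σ : Equiv.Perm ι) (u : ι → ℝ), c (u ∘ σ) = c u) (i : ι) (r : ℝ) :
    Fintype.card ι *
        ∫ u in {u | u i = ⨆ k, u k ∧ u i ≤ r}, c u ∂volume.restrict (univ.pi fun _ => s) =
      ∫ u in {u | ⨆ k, u k ≤ r}, c u ∂volume.restrict (univ.pi fun _ => s) := by
  have hcover : {u : ι → ℝ | ⨆ k, u k ≤ r} = ⋃ j, {u | u j = ⨆ k, u k ∧ u j ≤ r} := by
    ext u
    simp only [mem_iUnion]
    constructor
    · intro h
      obtain ⟨j, hj⟩ := exists_eq_ciSup_of_finite (f := u)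
      exact ⟨j, hj, hj ▸ h⟩
    · rintro ⟨j, hj, hjr⟩
      exact (show ⨆ k, u k ≤ r from hj ▸ hjr)
  have hdisj : Pairwise fun j l => AEDisjoint (volume.restrict (univ.pi fun _ => s))
      {u : ι → ℝ | u j = ⨆ k, u k ∧ u j ≤ r} {u | u l = ⨆ k, u k ∧ u l ≤ r} :=
    fun j l hjl => measure_mono_null (fun u hu => hu.1.1.trans hu.2.1.symm)
      (Measure.absolutelyContinuous_of_le Measure.restrict_le_self
        (volume_setOf_apply_eq_apply hjl))
  rw [hcover,
    integral_iUnion_ae (fun j => (measurableSet_apply_eq_iSup_and_le j r).nullMeasurableSet) hdisj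
      hint.integrable.integrableOn, tsum_fintype,
    Finset.sum_congr rfl fun j _ => setIntegral_apply_eq_iSup_and_le_of_perm_invariant hc j i r,
    Finset.sum_const, Finset.card_univ, nsmul_eq_mul]

theorem setIntegral_apply_lt_iSup_and_le_of_perm_invariant [Nonempty ι]
    (hint : IntegrableOn c (univ.pi fun _ => s))
    (hc : ∀ (σ : Equiv.Perm ι) (u : ι → ℝ), c (u ∘ σ) = c u) (i : ι) (r : ℝ) :
    ∫ u in {u | u i < ⨆ k, u k ∧ u i ≤ r}, c u ∂volume.restrict (univ.pi fun _ => s) =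
      ∫ u in {u | u i ≤ r}, c u ∂volume.restrict (univ.pi fun _ => s) -
        (∫ u in {u | ⨆ k, u k ≤ r}, c u ∂volume.restrict (univ.pi fun _ => s)) /
          Fintype.card ι := by
  rw [setIntegral_apply_lt_iSup_and_le hint, ← card_mul_setIntegral_apply_eq_iSup_and_le hint hc i,
    mul_div_cancel_left₀ _ (Nat.cast_ne_zero.2 Fintype.card_ne_zero)]

end MaxCoordinate

section FundamentalTheorem

variable {f f' : ℝ → ℝ} {K : ℝ≥0} {a b r : ℝ}

theorem AbsolutelyContinuousOnInterval.intervalIntegrable_of_ae_hasDerivAt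
    (hf : AbsolutelyContinuousOnInterval f a b)
    (hf' : ∀ᵐ t ∂volume.restrict (uIoc a b), HasDerivAt f (f' t) t) :
    IntervalIntegrable f' volume a b :=
  hf.intervalIntegrable_deriv.congr_ae (hf'.mono fun _ ht => ht.deriv)

theorem AbsolutelyContinuousOnInterval.integral_eq_sub_of_ae_hasDerivAt
    (hf : AbsolutelyContinuousOnInterval f a b)
    (hf' : ∀ᵐ t ∂volume.restrict (uIoc a b), HasDerivAt f (f' t) t) :
    ∫ t in a..b, f' t = f b - f a := by
  rw [← hf.integral_deriv_eq_sub]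
  exact intervalIntegral.integral_congr_ae_restrict (hf'.mono fun _ ht => ht.deriv.symm)

theorem LipschitzOnWith.intervalIntegrable_of_ae_hasDerivAt (hf : LipschitzOnWith K f (Icc a b))
    (hf' : ∀ᵐ t ∂volume.restrict (Icc a b), HasDerivAt f (f' t) t) (hr : r ∈ Icc a b) :
    IntervalIntegrable f' volume a r :=
  have hsub := uIcc_subset_Icc (left_mem_Icc.2 (hr.1.trans hr.2)) hr
  (hf.mono hsub).absolutelyContinuousOnInterval.intervalIntegrable_of_ae_hasDerivAt
    (ae_restrict_of_ae_restrict_of_subset (uIoc_subset_uIcc.trans hsub) hf')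

theorem LipschitzOnWith.integral_eq_sub_of_ae_hasDerivAt (hf : LipschitzOnWith K f (Icc a b))
    (hf' : ∀ᵐ t ∂volume.restrict (Icc a b), HasDerivAt f (f' t) t) (hr : r ∈ Icc a b) :
    ∫ t in a..r, f' t = f r - f a :=
  have hsub := uIcc_subset_Icc (left_mem_Icc.2 (hr.1.trans hr.2)) hr
  (hf.mono hsub).absolutelyContinuousOnInterval.integral_eq_sub_of_ae_hasDerivAt
    (ae_restrict_of_ae_restrict_of_subset (uIoc_subset_uIcc.trans hsub) hf')

end FundamentalTheorem

theorem MeasureTheory.Measure.ext_of_Iic_of_compl_Icc {μ ν : Measure ℝ} [IsFiniteMeasure μ]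
    {a b : ℝ} (hab : a ≤ b) (hμ : μ (Icc a b)ᶜ = 0) (hν : ν (Icc a b)ᶜ = 0)
    (h : ∀ r ∈ Icc a b, μ (Iic r) = ν (Iic r)) : μ = ν := by
  refine Measure.ext_of_Iic μ ν fun r => ?_
  rcases lt_or_ge r a with hra | hra
  · have hsub : Iic r ⊆ (Icc a b)ᶜ := fun x hx hx' => (hx.trans_lt hra).not_ge hx'.1
    rw [measure_mono_null hsub hμ, measure_mono_null hsub hν]
  rcases le_or_gt r b with hrb | hrb
  · exact h r ⟨hra, hrb⟩
  have hIic : ∀ ρ : Measure ℝ, ρ (Icc a b)ᶜ = 0 → ρ (Iic r) = ρ (Iic b) := fun ρ hρ =>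
    le_antisymm
      (calc ρ (Iic r) ≤ ρ (Iic b ∪ (Icc a b)ᶜ) :=
            measure_mono fun x _ => (le_or_gt x b).imp id fun hxb hx' => hxb.not_ge hx'.2
        _ ≤ ρ (Iic b) := (measure_union_le _ _).trans (by rw [hρ, add_zero]))
      (measure_mono (Iic_subset_Iic.2 hrb.le))
  rw [hIic μ hμ, hIic ν hν, h b ⟨hab, le_rfl⟩]

theorem MeasureTheory.Measure.eq_withDensity_of_Iic {ν : Measure ℝ} [IsFiniteMeasure ν]
    {h : ℝ → ℝ} {a b : ℝ} (hab : a ≤ b) (hν : ν (Icc a b)ᶜ = 0)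
    (hint : IntegrableOn h (Icc a b)) (hnn : ∀ᵐ x ∂volume.restrict (Icc a b), 0 ≤ h x)
    (hcdf : ∀ r ∈ Icc a b, ν (Iic r) = ENNReal.ofReal (∫ x in a..r, h x)) :
    ν = (volume.restrict (Icc a b)).withDensity fun x => ENNReal.ofReal (h x) := by
  have := isFiniteMeasure_withDensity_ofReal hint.hasFiniteIntegral
  refine ext_of_Iic_of_compl_Icc hab hν ?_ fun r hr => ?_
  · exact withDensity_absolutelyContinuous _ _ (by simp)
  have hIcc : Iic r ∩ Icc a b = Icc a r := by
    ext x
    exact ⟨fun hx => ⟨hx.2.1, hx.1⟩, fun hx => ⟨hx.2, hx.1, hx.2.trans hr.2⟩⟩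
  rw [hcdf r hr, withDensity_apply _ measurableSet_Iic, Measure.restrict_restrict measurableSet_Iic,
    hIcc, ← ofReal_integral_eq_lintegral_ofReal (hint.mono_set (Icc_subset_Icc_right hr.2))
      (ae_restrict_of_ae_restrict_of_subset (Icc_subset_Icc_right hr.2) hnn),
    intervalIntegral.integral_of_le hr.1, integral_Icc_eq_integral_Ioc]

theorem MeasureTheory.ae_eq_zero_of_setIntegral_le_eq_intervalIntegral {α : Type*}
    [MeasurableSpace α] {μ : Measure α} {c g : α → ℝ} {h : ℝ → ℝ} {a b : ℝ} (hab : a ≤ b)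
    (hc : Integrable c μ) (hc0 : 0 ≤ᵐ[μ] c) (hg : Measurable g)
    (hgab : ∀ᵐ u ∂μ, g u ∈ Icc a b) (hint : IntegrableOn h (Icc a b))
    (hnn : ∀ᵐ x ∂volume.restrict (Icc a b), 0 ≤ h x)
    (hcdf : ∀ r ∈ Icc a b, ∫ u in {u | g u ≤ r}, c u ∂μ = ∫ x in a..r, h x) :
    ∀ᵐ u ∂μ, h (g u) = 0 → c u = 0 := by
  -- `ν` is the law of `g` under `c · μ`; its distribution function identifies it with `h · volume`.
  set ν := (μ.withDensity fun u => ENNReal.ofReal (c u)).map g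
  have := isFiniteMeasure_withDensity_ofReal hc.hasFiniteIntegral
  have hν : ∀ t, MeasurableSet t → ν t = ENNReal.ofReal (∫ u in g ⁻¹' t, c u ∂μ) := fun t ht => by
    rw [Measure.map_apply hg ht, withDensity_apply _ (hg ht),
      ofReal_integral_eq_lintegral_ofReal hc.integrableOn (ae_restrict_of_ae hc0)]
  have hνIcc : ν (Icc a b)ᶜ = 0 := by
    rw [hν _ measurableSet_Icc.compl, setIntegral_measure_zero _ (s := g ⁻¹' (Icc a b)ᶜ)
        (measure_eq_zero_iff_ae_notMem.2 (hgab.mono fun _ hu => not_not_intro hu)),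
      ENNReal.ofReal_zero]
  have hνh : ν = (volume.restrict (Icc a b)).withDensity fun x => ENNReal.ofReal (h x) :=
    Measure.eq_withDensity_of_Iic hab hνIcc hint hnn fun r hr => by
      rw [hν _ measurableSet_Iic, ← hcdf r hr]; rfl
  have hνzero : ν {x | h x = 0} = 0 := by
    have hempty : {x | ENNReal.ofReal (h x) ≠ 0} ∩ {x | h x = 0} = ∅ :=
      eq_empty_of_forall_notMem fun x hx =>
        hx.1 (by rw [show h x = 0 from hx.2, ENNReal.ofReal_zero])
    rw [hνh, withDensity_apply_eq_zero' hint.aemeasurable.ennreal_ofReal, hempty, measure_empty]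
  have hpre := nonpos_iff_eq_zero.1 ((Measure.le_map_apply hg.aemeasurable _).trans_eq hνzero)
  rw [withDensity_apply_eq_zero' hc.aemeasurable.ennreal_ofReal,
    measure_eq_zero_iff_ae_notMem] at hpre
  filter_upwards [hpre, hc0] with u hu hu0 hhu
  by_contra hne
  exact hu ⟨(ENNReal.ofReal_pos.2 (lt_of_le_of_ne hu0 (Ne.symm hne))).ne', hhu⟩

theorem ae_eq_zero_of_setIntegral_apply_lt_iSup_and_le_eq {ι : Type*} [Fintype ι]
    {c : (ι → ℝ) → ℝ} {h : ℝ → ℝ} (hint : IntegrableOn c (univ.pi fun _ => Icc (0:ℝ) 1))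
    (hc0 : ∀ u, 0 ≤ c u) (hh : IntegrableOn h (Icc 0 1))
    (hh0 : ∀ᵐ x ∂volume.restrict (Icc 0 1), 0 ≤ h x) (i : ι)
    (hcdf : ∀ r ∈ Icc (0:ℝ) 1, ∫ u in {u | u i < ⨆ k, u k ∧ u i ≤ r}, c u
      ∂volume.restrict (univ.pi fun _ => Icc 0 1) = ∫ x in 0..r, h x) :
    ∀ᵐ u ∂volume.restrict (univ.pi fun _ => Icc (0:ℝ) 1),
      u i < ⨆ k, u k → h (u i) = 0 → c u = 0 := by
  have hcube : ∀ᵐ u ∂volume.restrict (univ.pi fun _ => Icc (0:ℝ) 1), u i ∈ Icc (0:ℝ) 1 :=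
    (ae_restrict_mem (MeasurableSet.univ_pi fun _ => measurableSet_Icc)).mono fun u hu =>
      hu i (mem_univ i)
  refine (ae_restrict_iff' (measurableSet_lt (measurable_pi_apply i) measurable_iSup_apply)).1
    (ae_eq_zero_of_setIntegral_le_eq_intervalIntegral zero_le_one hint.integrableOn
      (ae_of_all _ hc0) (measurable_pi_apply i) (ae_restrict_of_ae hcube) hh hh0 fun r hr => ?_)
  rw [Measure.restrict_restrict (measurableSet_le (measurable_pi_apply i) measurable_const),
    inter_comm, ← ofPred_and, hcdf r hr]

theorem symmetric_copula_off_max_marginal_general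
    (d : ℕ) (hd : 2 ≤ d) (δ δ' : ℝ → ℝ)
    (hlip : ∀ s ∈ Set.Icc (0:ℝ) 1, ∀ t ∈ Set.Icc (0:ℝ) 1,
      |δ s - δ t| ≤ (d : ℝ) * |s - t|)
    (h0 : δ 0 = 0)
    (hderiv : ∀ᵐ t ∂(volume.restrict (Set.Icc (0:ℝ) 1)), HasDerivAt δ (δ' t) t)
    (hd' : ∀ᵐ t ∂(volume.restrict (Set.Icc (0:ℝ) 1)), δ' t ∈ Set.Icc (0:ℝ) (d:ℝ))
    (c : (Fin d → ℝ) → ℝ)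
    (hint : IntegrableOn c (Set.univ.pi (fun _ : Fin d => Set.Icc (0:ℝ) 1)))
    (hnn : ∀ u, 0 ≤ c u)
    (hsym : ∀ (σ : Equiv.Perm (Fin d)) (u : Fin d → ℝ), c (u ∘ σ) = c u)
    (hmarg : ∀ i : Fin d, ∀ r ∈ Set.Icc (0:ℝ) 1,
      (∫ u in Set.univ.pi (fun _ : Fin d => Set.Icc (0:ℝ) 1),
        c u * (if u i ≤ r then 1 else 0)) = r)
    (hdiag : ∀ r ∈ Set.Icc (0:ℝ) 1,
      (∫ u in Set.univ.pi (fun _ : Fin d => Set.Icc (0:ℝ) 1),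
        c u * (if (⨆ i, u i) ≤ r then 1 else 0)) = δ r) :
    (∀ i : Fin d, ∀ r ∈ Set.Icc (0:ℝ) 1,
      (∫ u in Set.univ.pi (fun _ : Fin d => Set.Icc (0:ℝ) 1),
        c u * (if u i < (⨆ j, u j) ∧ u i ≤ r then 1 else 0))
        = r - δ r / d ∧
      (∫ u in Set.univ.pi (fun _ : Fin d => Set.Icc (0:ℝ) 1),
        c u * (if u i < (⨆ j, u j) ∧ u i ≤ r then 1 else 0))
        = ∫ s in (0:ℝ)..r, (1 - δ' s / d)) ∧
    (∀ᵐ u ∂(volume.restrict (Set.univ.pi (fun _ : Fin d => Set.Icc (0:ℝ) 1))),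
      (∃ i, u i < (⨆ j, u j) ∧ δ' (u i) = d) → c u = 0) := by
  have : Nonempty (Fin d) := ⟨⟨0, by omega⟩⟩
  have hd0 : (d : ℝ) ≠ 0 := Nat.cast_ne_zero.2 (by omega)
  set μ := volume.restrict (univ.pi fun _ : Fin d => Icc (0:ℝ) 1)
  have hoff (i : Fin d) (r : ℝ) (hr : r ∈ Icc 0 1) :
      ∫ u in {u | u i < ⨆ j, u j ∧ u i ≤ r}, c u ∂μ = r - δ r / d := by
    rw [setIntegral_apply_lt_iSup_and_le_of_perm_invariant hint hsym,
      ← integral_mul_ite_one_zero c (measurableSet_le (measurable_pi_apply i) measurable_const),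
      ← integral_mul_ite_one_zero c (measurableSet_le measurable_iSup_apply measurable_const),
      hmarg i r hr, hdiag r hr, Fintype.card_fin]
  have hlipδ : LipschitzOnWith (d : ℝ≥0) δ (Icc 0 1) :=
    .of_dist_le_mul fun s hs t ht => by simpa [Real.dist_eq] using hlip s hs t ht
  have hdens (r : ℝ) (hr : r ∈ Icc (0:ℝ) 1) : ∫ s in (0:ℝ)..r, (1 - δ' s / d) = r - δ r / d := by
    rw [intervalIntegral.integral_sub intervalIntegrable_const
      ((hlipδ.intervalIntegrable_of_ae_hasDerivAt hderiv hr).div_const _),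
      intervalIntegral.integral_div, hlipδ.integral_eq_sub_of_ae_hasDerivAt hderiv hr, h0]
    simp
  have hdens_int : IntegrableOn (fun s => 1 - δ' s / d) (Icc 0 1) :=
    (intervalIntegrable_iff_integrableOn_Icc_of_le zero_le_one).1 (intervalIntegrable_const.sub
      ((hlipδ.intervalIntegrable_of_ae_hasDerivAt hderiv ⟨zero_le_one, le_rfl⟩).div_const _))
  have hdens_nn : ∀ᵐ s ∂volume.restrict (Icc 0 1), 0 ≤ 1 - δ' s / d := by
    filter_upwards [hd'] with s hs
    exact sub_nonneg.2 (div_le_one_of_le₀ hs.2 (Nat.cast_nonneg d))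
  refine ⟨fun i r hr => ?_, ?_⟩
  · rw [integral_mul_ite_one_zero c (p := fun u => u i < ⨆ j, u j ∧ u i ≤ r) ((measurableSet_lt
      (measurable_pi_apply i) measurable_iSup_apply).inter
        (measurableSet_le (measurable_pi_apply i) measurable_const)), hoff i r hr, hdens r hr]
    exact ⟨rfl, rfl⟩
  filter_upwards [ae_all_iff.2 fun i => ae_eq_zero_of_setIntegral_apply_lt_iSup_and_le_eq hint hnn
    hdens_int hdens_nn i fun r hr => (hoff i r hr).trans (hdens r hr).symm]
    with u hu ⟨i, hlt, hδ⟩ using hu i hlt (by rw [hδ, div_self hd0, sub_self])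

/-- For a symmetric copula density c with diagonal section δ:
∫ c(u)1{uᵢ < max u, uᵢ ≤ r} du = r - δ(r)/d = ∫_0^r (1 - δ'(s)/d) ds, and
c = 0 a.e. on {u : ∃ i, uᵢ < max u and δ'(uᵢ) = d}. -/
theorem symmetric_copula_off_max_marginal
    (d : ℕ) (hd : 2 ≤ d) (δ δ' : ℝ → ℝ)
    (hmono : MonotoneOn δ (Set.Icc 0 1))
    (hlip : ∀ s ∈ Set.Icc (0:ℝ) 1, ∀ t ∈ Set.Icc (0:ℝ) 1,
      |δ s - δ t| ≤ (d : ℝ) * |s - t|)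
    (h0 : δ 0 = 0) (h1 : δ 1 = 1)
    (hderiv : ∀ᵐ t ∂(volume.restrict (Set.Icc (0:ℝ) 1)), HasDerivAt δ (δ' t) t)
    (hd' : ∀ᵐ t ∂(volume.restrict (Set.Icc (0:ℝ) 1)), δ' t ∈ Set.Icc (0:ℝ) (d:ℝ))
    (c : (Fin d → ℝ) → ℝ)
    (hint : IntegrableOn c (Set.univ.pi (fun _ : Fin d => Set.Icc (0:ℝ) 1)))
    (hnn : ∀ u, 0 ≤ c u)
    (hsym : ∀ (σ : Equiv.Perm (Fin d)) (u : Fin d → ℝ), c (u ∘ σ) = c u)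
    (hmarg : ∀ i : Fin d, ∀ r ∈ Set.Icc (0:ℝ) 1,
      (∫ u in Set.univ.pi (fun _ : Fin d => Set.Icc (0:ℝ) 1),
        c u * (if u i ≤ r then 1 else 0)) = r)
    (hdiag : ∀ r ∈ Set.Icc (0:ℝ) 1,
      (∫ u in Set.univ.pi (fun _ : Fin d => Set.Icc (0:ℝ) 1),
        c u * (if (⨆ i, u i) ≤ r then 1 else 0)) = δ r) :
    (∀ i : Fin d, ∀ r ∈ Set.Icc (0:ℝ) 1,
      (∫ u in Set.univ.pi (fun _ : Fin d => Set.Icc (0:ℝ) 1),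
        c u * (if u i < (⨆ j, u j) ∧ u i ≤ r then 1 else 0))
        = r - δ r / d ∧
      (∫ u in Set.univ.pi (fun _ : Fin d => Set.Icc (0:ℝ) 1),
        c u * (if u i < (⨆ j, u j) ∧ u i ≤ r then 1 else 0))
        = ∫ s in (0:ℝ)..r, (1 - δ' s / d)) ∧
    (∀ᵐ u ∂(volume.restrict (Set.univ.pi (fun _ : Fin d => Set.Icc (0:ℝ) 1))),
      (∃ i, u i < (⨆ j, u j) ∧ δ' (u i) = d) → c u = 0) :=
  symmetric_copula_off_max_marginal_general d hd δ δ' hlip h0 hderiv hd' c hint hnn hsym hmarg hdiag
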